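/- arXiv:2603.14263 — 5 statements merged into one kernel-verified Lean document; each statement's English description precedes it below -/
import Mathlib

section
/- Let x₁ and x₂ be two points of the polyhedral localization set 𝒳_d, and assume the centered scatter matrix S(A) = A Q_m Aᵀ is positive definite. Then x₁ − x₂ = (1/2) S(A)⁻¹ A Q_m (ξ₂ − ξ₁), where ξ₁, ξ₂ ∈ H are measurement vectors witnessing membership of x₁ and x₂ in 𝒳_d; consequently, for every vector v ∈ ℝⁿ, |vᵀ(x₁ − x₂)| ≤ (1/2) wᵀ |Q_m Aᵀ S(A)⁻¹ v|, where the absolute value of a vector is taken entrywise and w = ξ⁺ − ξ⁻. -/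
/-!
Subtracting the defining relations of ξ₁ and ξ₂ eliminates Q_m ω. Applying A Q_m then kills the
shifts (α₂ − α₁)𝟙, since Q_m 𝟙 = 0, and Q_m² = Q_m turns A Q_m · 2 Q_m Aᵀ (x₁ − x₂) into
2 S(A) (x₁ − x₂); inverting S(A) gives the formula for x₁ − x₂. Since S(A) and Q_m are symmetric,
vᵀ(x₁ − x₂) = ½ (ξ₂ − ξ₁)ᵀ Q_m Aᵀ S(A)⁻¹ v, and |ξ₂ − ξ₁| ≤ w entrywise because ξ₁, ξ₂ ∈ H.
-/

open Matrix
open scoped InnerProductSpace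

noncomputable section

/-- Reinterpret a plain vector as a point of Euclidean space (with the ℓ² norm). -/
def toE {n : ℕ} (v : Fin n → ℝ) : EuclideanSpace ℝ (Fin n) := WithLp.toLp 2 v

/-- The all-ones m×m matrix 𝟙𝟙ᵀ. -/
def onesM (m : ℕ) : Matrix (Fin m) (Fin m) ℝ := Matrix.of fun _ _ => 1

/-- The centering projector Q_m = I_m − (1/m)𝟙𝟙ᵀ. -/
def Qm (m : ℕ) : Matrix (Fin m) (Fin m) ℝ := 1 - (m : ℝ)⁻¹ • onesM m

/-- The i-th anchor a⁽ⁱ⁾, i.e. the i-th column of A, as a Euclidean point. -/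
def colE {n m : ℕ} (A : Matrix (Fin n) (Fin m) ℝ) (i : Fin m) : EuclideanSpace ℝ (Fin n) :=
  toE fun k => A k i

/-- The vector ω ∈ ℝᵐ with entries ωᵢ = ‖a⁽ⁱ⁾‖₂². -/
def omegaV {n m : ℕ} (A : Matrix (Fin n) (Fin m) ℝ) : Fin m → ℝ := fun i => ‖colE A i‖ ^ 2

/-- The polyhedral localization set
𝒳_d = {x : ∃ α, ξ⁻ ≤ Q_m ω − 2 Q_m Aᵀ x + α𝟙 ≤ ξ⁺}. -/
def Xd {n m : ℕ} (A : Matrix (Fin n) (Fin m) ℝ) (xim xip : Fin m → ℝ) :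
    Set (EuclideanSpace ℝ (Fin n)) :=
  {x | ∃ α : ℝ,
      xim ≤ (Qm m).mulVec (omegaV A) - (2 : ℝ) • ((Qm m * Aᵀ).mulVec x) + α • (1 : Fin m → ℝ) ∧
      (Qm m).mulVec (omegaV A) - (2 : ℝ) • ((Qm m * Aᵀ).mulVec x) + α • (1 : Fin m → ℝ) ≤ xip}

/-- The intersection ℋ of the upper-range balls: ℋ = ∩ᵢ {x : ‖x − a⁽ⁱ⁾‖₂ ≤ √ξᵢ⁺}. -/
def Hset {n m : ℕ} (A : Matrix (Fin n) (Fin m) ℝ) (xip : Fin m → ℝ) :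
    Set (EuclideanSpace ℝ (Fin n)) :=
  {x | ∀ i, ‖x - colE A i‖ ≤ Real.sqrt (xip i)}

/-- Support function h_Ω(v) = sup_{x∈Ω} vᵀx. -/
def suppF {n : ℕ} (Ω : Set (EuclideanSpace ℝ (Fin n))) (v : EuclideanSpace ℝ (Fin n)) : ℝ :=
  sSup ((fun x => ⟪v, x⟫_ℝ) '' Ω)

/-- ψ_Ω(v) = h_Ω(v) + h_Ω(−v). -/
def psiH {n : ℕ} (Ω : Set (EuclideanSpace ℝ (Fin n))) (v : EuclideanSpace ℝ (Fin n)) : ℝ :=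
  suppF Ω v + suppF Ω (-v)

/-- Directional width width_v(Ω) = sup_{x∈Ω} vᵀx − inf_{x∈Ω} vᵀx. -/
def dwidth {n : ℕ} (v : EuclideanSpace ℝ (Fin n)) (Ω : Set (EuclideanSpace ℝ (Fin n))) : ℝ :=
  sSup ((fun x => ⟪v, x⟫_ℝ) '' Ω) - sInf ((fun x => ⟪v, x⟫_ℝ) '' Ω)

/-- The aggregated squared radius ρ(p)² = pᵀ(ξ⁺ − ω) + ‖Ap‖₂². -/
def rho2 {n m : ℕ} (A : Matrix (Fin n) (Fin m) ℝ) (xip : Fin m → ℝ) (p : Fin m → ℝ) : ℝ :=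
  p ⬝ᵥ (xip - omegaV A) + ‖toE (A.mulVec p)‖ ^ 2


lemma onesM_mul_self (m : ℕ) : onesM m * onesM m = (m : ℝ) • onesM m := by
  ext i j
  simp [onesM, Matrix.mul_apply]

lemma Qm_transpose (m : ℕ) : (Qm m)ᵀ = Qm m := by
  ext i j
  simp [Qm, onesM, one_apply, eq_comm]

lemma Qm_mul_self (m : ℕ) : Qm m * Qm m = Qm m := by
  rcases Nat.eq_zero_or_pos m with rfl | hm
  · exact Subsingleton.elim _ _
  · have hm' : ((m : ℝ)⁻¹ * ((m : ℝ)⁻¹ * m)) = (m : ℝ)⁻¹ := by field_simp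
    simp only [Qm, sub_mul, mul_sub, one_mul, mul_one, Matrix.smul_mul, Matrix.mul_smul,
      onesM_mul_self, smul_smul, hm']
    abel

lemma Qm_mulVec_one (m : ℕ) : Qm m *ᵥ 1 = 0 := by
  rcases Nat.eq_zero_or_pos m with rfl | hm
  · exact Subsingleton.elim _ _
  · funext i
    simp [Qm, onesM, mulVec, dotProduct, one_apply, hm.ne']

section

variable {R ι κ : Type*} [Fintype ι] [Fintype κ]

lemma mul_mulVec_smul_add_smul_one [CommRing R] (A : Matrix ι κ R) {Q : Matrix κ κ R}
    (hQQ : Q * Q = Q) (hQ1 : Q *ᵥ 1 = 0) (c a : R) (y : ι → R) :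
    (A * Q) *ᵥ (c • ((Q * Aᵀ) *ᵥ y) + a • 1) = c • ((A * Q * Aᵀ) *ᵥ y) := by
  have hAQ1 : (A * Q) *ᵥ 1 = 0 := by rw [← mulVec_mulVec, hQ1, mulVec_zero]
  have hAQQ : A * Q * (Q * Aᵀ) = A * Q * Aᵀ := by
    rw [← Matrix.mul_assoc, Matrix.mul_assoc A, hQQ]
  rw [mulVec_add, mulVec_smul, mulVec_mulVec, hAQQ, mulVec_smul, hAQ1, smul_zero, add_zero]

lemma eq_inv_smul_inv_mul_mulVec_of_mulVec_eq [Field R] [DecidableEq ι] {S : Matrix ι ι R}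
    (hS : IsUnit S.det) {B : Matrix ι κ R} {c : R} (hc : c ≠ 0) {d : κ → R} {y : ι → R}
    (h : B *ᵥ d = c • (S *ᵥ y)) : y = c⁻¹ • ((S⁻¹ * B) *ᵥ d) := by
  rw [← mulVec_mulVec, h, mulVec_smul, mulVec_mulVec, nonsing_inv_mul _ hS, one_mulVec,
    inv_smul_smul₀ hc]

lemma transpose_inv_mul_mul_eq [CommRing R] [DecidableEq ι] (A : Matrix ι κ R)
    {Q : Matrix κ κ R} (hQ : Qᵀ = Q) :
    ((A * Q * Aᵀ)⁻¹ * A * Q)ᵀ = Q * Aᵀ * (A * Q * Aᵀ)⁻¹ := by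
  have hS : (A * Q * Aᵀ)ᵀ = A * Q * Aᵀ := by
    rw [transpose_mul, transpose_mul, transpose_transpose, hQ, Matrix.mul_assoc]
  rw [transpose_mul, transpose_mul, hQ, transpose_nonsing_inv, hS, ← Matrix.mul_assoc]

lemma abs_sub_dotProduct_le [Field R] [LinearOrder R] [IsStrictOrderedRing R]
    {lo hi ξ₁ ξ₂ : ι → R} (h₁ : lo ≤ ξ₁ ∧ ξ₁ ≤ hi) (h₂ : lo ≤ ξ₂ ∧ ξ₂ ≤ hi) (u : ι → R) :
    |(ξ₂ - ξ₁) ⬝ᵥ u| ≤ (hi - lo) ⬝ᵥ fun i => |u i| := by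
  calc |(ξ₂ - ξ₁) ⬝ᵥ u| ≤ ∑ i, |(ξ₂ i - ξ₁ i) * u i| := Finset.abs_sum_le_sum_abs _ _
    _ ≤ ∑ i, (hi i - lo i) * |u i| := by
      refine Finset.sum_le_sum fun i _ => ?_
      rw [abs_mul]
      gcongr
      exact abs_sub_le_of_le_of_le (h₂.1 i) (h₂.2 i) (h₁.1 i) (h₁.2 i)
    _ = (hi - lo) ⬝ᵥ fun i => |u i| := rfl

end

/-- If x₁, x₂ ∈ 𝒳_d with measurement witnesses ξ₁, ξ₂ ∈ H and shifts α₁, α₂, and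
S(A) = A Q_m Aᵀ ≻ 0, then x₁ − x₂ = (1/2) S(A)⁻¹ A Q_m (ξ₂ − ξ₁), and for every v ∈ ℝⁿ,
|vᵀ(x₁ − x₂)| ≤ (1/2) wᵀ |Q_m Aᵀ S(A)⁻¹ v| with w = ξ⁺ − ξ⁻. -/
theorem stmt0 {n m : ℕ} (A : Matrix (Fin n) (Fin m) ℝ) (xim xip : Fin m → ℝ)
    (hpd : (A * Qm m * Aᵀ).PosDef)
    (x₁ x₂ : EuclideanSpace ℝ (Fin n)) (α₁ α₂ : ℝ) (ξ₁ ξ₂ : Fin m → ℝ)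
    (hξ₁H : xim ≤ ξ₁ ∧ ξ₁ ≤ xip) (hξ₂H : xim ≤ ξ₂ ∧ ξ₂ ≤ xip)
    (hξ₁ : ξ₁ = (Qm m).mulVec (omegaV A) - (2 : ℝ) • ((Qm m * Aᵀ).mulVec x₁)
        + α₁ • (1 : Fin m → ℝ))
    (hξ₂ : ξ₂ = (Qm m).mulVec (omegaV A) - (2 : ℝ) • ((Qm m * Aᵀ).mulVec x₂)
        + α₂ • (1 : Fin m → ℝ)) :
    x₁ - x₂ = toE ((2 : ℝ)⁻¹ • (((A * Qm m * Aᵀ)⁻¹ * A * Qm m).mulVec (ξ₂ - ξ₁))) ∧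
      ∀ v : EuclideanSpace ℝ (Fin n),
        |⟪v, x₁ - x₂⟫_ℝ| ≤
          (2 : ℝ)⁻¹ *
            ((xip - xim) ⬝ᵥ fun i => |((Qm m * Aᵀ * (A * Qm m * Aᵀ)⁻¹).mulVec v) i|) := by
  have hS : IsUnit (A * Qm m * Aᵀ).det := isUnit_iff_ne_zero.mpr hpd.det_pos.ne'
  have hsub : ξ₂ - ξ₁ = (2 : ℝ) • ((Qm m * Aᵀ) *ᵥ (x₁.ofLp - x₂.ofLp)) + (α₂ - α₁) • 1 := by
    rw [hξ₁, hξ₂, mulVec_sub, smul_sub, sub_smul]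
    abel
  have hcentered :
      (A * Qm m) *ᵥ (ξ₂ - ξ₁) = (2 : ℝ) • ((A * Qm m * Aᵀ) *ᵥ (x₁.ofLp - x₂.ofLp)) := by
    rw [hsub, mul_mulVec_smul_add_smul_one A (Qm_mul_self m) (Qm_mulVec_one m)]
  have hdiff : x₁ - x₂ = toE ((2 : ℝ)⁻¹ • (((A * Qm m * Aᵀ)⁻¹ * A * Qm m) *ᵥ (ξ₂ - ξ₁))) := by
    rw [Matrix.mul_assoc _ A, ← eq_inv_smul_inv_mul_mulVec_of_mulVec_eq hS two_ne_zero hcentered]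
    rfl
  refine ⟨hdiff, fun v => ?_⟩
  have hinner : ⟪v, x₁ - x₂⟫_ℝ
      = (2 : ℝ)⁻¹ * ((ξ₂ - ξ₁) ⬝ᵥ (Qm m * Aᵀ * (A * Qm m * Aᵀ)⁻¹) *ᵥ v.ofLp) := by
    rw [hdiff, toE, EuclideanSpace.inner_toLp_toLp, star_trivial, smul_dotProduct, smul_eq_mul,
      dotProduct_comm, dotProduct_mulVec, ← mulVec_transpose,
      transpose_inv_mul_mul_eq A (Qm_transpose m), dotProduct_comm]
  rw [hinner, abs_mul, abs_of_pos (by norm_num : (0 : ℝ) < 2⁻¹)]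
  gcongr
  exact abs_sub_dotProduct_le hξ₁H hξ₂H _
end
end

section
/- Assume the centered scatter matrix S(A) = A Q_m Aᵀ is positive definite. Then for every vector v ∈ ℝⁿ and every nonnegative vector w ∈ ℝᵐ, (1/2) wᵀ |Q_m Aᵀ S(A)⁻¹ v| ≤ (1/2) ‖w‖₂ √(vᵀ S(A)⁻¹ v), where the absolute value of a vector is taken entrywise. -/
open Matrix
open scoped InnerProductSpace

noncomputable section

lemma mul_Qm_mul_transpose_eq_gram {n m : ℕ} (A : Matrix (Fin n) (Fin m) ℝ) :
    A * Qm m * Aᵀ = (Qm m * Aᵀ)ᵀ * (Qm m * Aᵀ) := by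
  simp only [transpose_mul, transpose_transpose, Qm_transpose, Matrix.mul_assoc,
    ← Matrix.mul_assoc (Qm m) (Qm m), Qm_mul_self]

lemma dotProduct_self_mul_inv_gram_mulVec {R ι κ : Type*} [CommRing R] [Fintype ι] [Fintype κ]
    [DecidableEq κ] (P : Matrix ι κ R) (hP : IsUnit (Pᵀ * P)) (v : κ → R) :
    (P * (Pᵀ * P)⁻¹) *ᵥ v ⬝ᵥ (P * (Pᵀ * P)⁻¹) *ᵥ v = v ⬝ᵥ (Pᵀ * P)⁻¹ *ᵥ v := by
  have hG : (Pᵀ * P)ᵀ = Pᵀ * P := by rw [transpose_mul, transpose_transpose]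
  have hM : (P * (Pᵀ * P)⁻¹)ᵀ * (P * (Pᵀ * P)⁻¹) = (Pᵀ * P)⁻¹ := by
    rw [transpose_mul, transpose_nonsing_inv, hG, Matrix.mul_assoc, ← Matrix.mul_assoc Pᵀ,
      mul_nonsing_inv _ ((isUnit_iff_isUnit_det _).mp hP), Matrix.mul_one]
  rw [dotProduct_mulVec, vecMul_mulVec, ← mulVec_transpose, hM, transpose_nonsing_inv, hG,
    dotProduct_comm]

lemma norm_toE {m : ℕ} (x : Fin m → ℝ) : ‖toE x‖ = √(x ⬝ᵥ x) := by
  simp [EuclideanSpace.norm_eq, toE, dotProduct, sq]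

lemma dotProduct_abs_le_norm_mul_sqrt {m : ℕ} (w u : Fin m → ℝ) :
    (w ⬝ᵥ fun i => |u i|) ≤ ‖toE w‖ * √(u ⬝ᵥ u) := by
  have h := Real.sum_mul_le_sqrt_mul_sqrt Finset.univ w fun i => |u i|
  simpa [norm_toE, dotProduct, sq] using h

theorem stmt2_general {n m : ℕ} (A : Matrix (Fin n) (Fin m) ℝ)
    (hpd : (A * Qm m * Aᵀ).PosDef) (v : Fin n → ℝ) (w : Fin m → ℝ) :
    (2 : ℝ)⁻¹ * (w ⬝ᵥ fun i => |((Qm m * Aᵀ * (A * Qm m * Aᵀ)⁻¹).mulVec v) i|) ≤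
      (2 : ℝ)⁻¹ * ‖toE w‖ * Real.sqrt (v ⬝ᵥ (A * Qm m * Aᵀ)⁻¹.mulVec v) := by
  rw [mul_Qm_mul_transpose_eq_gram] at hpd ⊢
  rw [← dotProduct_self_mul_inv_gram_mulVec _ hpd.isUnit, mul_assoc]
  gcongr
  exact dotProduct_abs_le_norm_mul_sqrt _ _

/-- If S(A) = A Q_m Aᵀ ≻ 0, then for every v ∈ ℝⁿ and every nonnegative w ∈ ℝᵐ,
(1/2) wᵀ |Q_m Aᵀ S(A)⁻¹ v| ≤ (1/2) ‖w‖₂ √(vᵀ S(A)⁻¹ v). -/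
theorem stmt2 {n m : ℕ} (A : Matrix (Fin n) (Fin m) ℝ)
    (hpd : (A * Qm m * Aᵀ).PosDef) (v : Fin n → ℝ) (w : Fin m → ℝ) (hw : ∀ i, 0 ≤ w i) :
    (2 : ℝ)⁻¹ * (w ⬝ᵥ fun i => |((Qm m * Aᵀ * (A * Qm m * Aᵀ)⁻¹).mulVec v) i|) ≤
      (2 : ℝ)⁻¹ * ‖toE w‖ * Real.sqrt (v ⬝ᵥ (A * Qm m * Aᵀ)⁻¹.mulVec v) :=
  stmt2_general A hpd v w
end
end

section
/- Let ℋ = ∩ᵢ {x ∈ ℝⁿ : ‖x − a⁽ⁱ⁾‖₂ ≤ √(ξᵢ⁺)} be the intersection of the upper-range balls, and let p ∈ Δ_m be any weight vector in the probability simplex. Then for every x ∈ ℋ, ‖x − c(p)‖₂² ≤ ρ(p)², where c(p) = Ap and ρ(p)² = pᵀ(ξ⁺ − ω) + ‖Ap‖₂²; that is, ℋ is contained in the closed Euclidean ball of center c(p) and squared radius ρ(p)². -/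
open Matrix
open scoped InnerProductSpace

noncomputable section

section WeightedMean

variable {E ι : Type*} [NormedAddCommGroup E] [InnerProductSpace ℝ E]

/-- Expand ‖x − aᵢ‖² and average: the terms in ‖x‖² collapse because the weights sum to one. -/
theorem norm_sub_weighted_sum_sq (s : Finset ι) (w : ι → ℝ) (hw : ∑ i ∈ s, w i = 1)
    (a : ι → E) (x : E) :
    ‖x - ∑ i ∈ s, w i • a i‖ ^ 2
      = ∑ i ∈ s, w i * ‖x - a i‖ ^ 2 - ∑ i ∈ s, w i * ‖a i‖ ^ 2
        + ‖∑ i ∈ s, w i • a i‖ ^ 2 := by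
  have hinner : ⟪x, ∑ i ∈ s, w i • a i⟫_ℝ = ∑ i ∈ s, w i * ⟪x, a i⟫_ℝ := by
    simp only [inner_sum, real_inner_smul_right]
  have hexpand : ∑ i ∈ s, w i * ‖x - a i‖ ^ 2
      = (∑ i ∈ s, w i) * ‖x‖ ^ 2 - 2 * ∑ i ∈ s, w i * ⟪x, a i⟫_ℝ
        + ∑ i ∈ s, w i * ‖a i‖ ^ 2 := by
    simp only [norm_sub_sq_real x, Finset.sum_mul, Finset.mul_sum, ← Finset.sum_sub_distrib,
      ← Finset.sum_add_distrib]
    exact Finset.sum_congr rfl fun i _ => by ring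
  rw [norm_sub_sq_real x, hinner, hexpand, hw]
  ring

theorem norm_sub_weighted_sum_sq_le (s : Finset ι) (w : ι → ℝ) (hw0 : ∀ i ∈ s, 0 ≤ w i)
    (hw : ∑ i ∈ s, w i = 1) (a : ι → E) (r : ι → ℝ) (x : E)
    (hx : ∀ i ∈ s, ‖x - a i‖ ^ 2 ≤ r i) :
    ‖x - ∑ i ∈ s, w i • a i‖ ^ 2
      ≤ ∑ i ∈ s, w i * (r i - ‖a i‖ ^ 2) + ‖∑ i ∈ s, w i • a i‖ ^ 2 := by
  have hmean : ∑ i ∈ s, w i * ‖x - a i‖ ^ 2 ≤ ∑ i ∈ s, w i * r i :=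
    Finset.sum_le_sum fun i hi => mul_le_mul_of_nonneg_left (hx i hi) (hw0 i hi)
  rw [norm_sub_weighted_sum_sq s w hw]
  simp only [mul_sub, Finset.sum_sub_distrib]
  linarith

end WeightedMean

theorem toE_mulVec_eq_sum_colE {n m : ℕ} (A : Matrix (Fin n) (Fin m) ℝ) (p : Fin m → ℝ) :
    toE (A.mulVec p) = ∑ i, p i • colE A i := by
  ext k
  simp [toE, colE, Matrix.mulVec, dotProduct, mul_comm]

theorem rho2_eq_sum {n m : ℕ} (A : Matrix (Fin n) (Fin m) ℝ) (xip p : Fin m → ℝ) :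
    rho2 A xip p = ∑ i, p i * (xip i - ‖colE A i‖ ^ 2) + ‖∑ i, p i • colE A i‖ ^ 2 := by
  rw [rho2, toE_mulVec_eq_sum_colE]
  rfl

/-- For any p ∈ Δ_m, every x ∈ ℋ satisfies ‖x − c(p)‖₂² ≤ ρ(p)², where
c(p) = Ap and ρ(p)² = pᵀ(ξ⁺ − ω) + ‖Ap‖₂²; i.e. ℋ is contained in the ball of center c(p)
and squared radius ρ(p)². -/
theorem stmt7 {n m : ℕ} (A : Matrix (Fin n) (Fin m) ℝ) (xip : Fin m → ℝ)
    (hxip : ∀ i, 0 ≤ xip i) (p : Fin m → ℝ) (hp : p ∈ stdSimplex ℝ (Fin m))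
    (x : EuclideanSpace ℝ (Fin n)) (hx : x ∈ Hset A xip) :
    ‖x - toE (A.mulVec p)‖ ^ 2 ≤ rho2 A xip p := by
  have hball : ∀ i ∈ Finset.univ, ‖x - colE A i‖ ^ 2 ≤ xip i := fun i _ =>
    (Real.le_sqrt (norm_nonneg _) (hxip i)).mp (hx i)
  rw [rho2_eq_sum, toE_mulVec_eq_sum_colE]
  exact norm_sub_weighted_sum_sq_le _ p (fun i _ => hp.1 i) hp.2 _ xip x hball
end
end

section
/- Let ℋ = ∩ᵢ {x ∈ ℝⁿ : ‖x − a⁽ⁱ⁾‖₂ ≤ √(ξᵢ⁺)} and let 𝒳 ⊆ ℋ be any subset (in particular the localization set 𝒳 = 𝒳_d ∩ ℋ). Then for every weight p in the probability simplex Δ_m, the Euclidean diameter satisfies diam(𝒳) ≤ 2 ρ(p), where ρ(p)² = pᵀ(ξ⁺ − ω) + ‖Ap‖₂²; in particular diam(𝒳) ≤ 2 ρ⋆ with ρ⋆ = inf over p ∈ Δ_m of ρ(p). -/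
open Matrix
open scoped InnerProductSpace

noncomputable section

/-!
For `p ∈ Δ_m` and `c = A p = ∑ pᵢ a⁽ⁱ⁾`, expanding squares gives
`∑ pᵢ ‖x - a⁽ⁱ⁾‖² = ‖x - c‖² + ∑ pᵢ ‖a⁽ⁱ⁾‖² - ‖c‖²`. For `x ∈ ℋ` the left side is at most `pᵀξ⁺`,
so `‖x - c‖ ≤ ρ(p)`: all of `ℋ` lies in one ball of radius `ρ(p)`, whose diameter is at most
`2ρ(p)`. Since `r ↦ 2r` is continuous and monotone, the bound passes to the infimum `ρ⋆`.
-/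

section WeightedMean

variable {E ι : Type*} [NormedAddCommGroup E] [InnerProductSpace ℝ E]
  {s : Finset ι} {p : ι → ℝ}

lemma sum_mul_norm_sub_sq (hp : ∑ i ∈ s, p i = 1) (a : ι → E) (x : E) :
    ∑ i ∈ s, p i * ‖x - a i‖ ^ 2 =
      ‖x‖ ^ 2 - 2 * ⟪x, ∑ i ∈ s, p i • a i⟫_ℝ + ∑ i ∈ s, p i * ‖a i‖ ^ 2 := by
  simp only [norm_sub_sq_real, mul_add, mul_sub, Finset.sum_add_distrib, Finset.sum_sub_distrib,
    inner_sum, real_inner_smul_right, ← Finset.sum_mul, hp, one_mul, Finset.mul_sum]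
  congr 2
  exact Finset.sum_congr rfl fun i _ => by ring

lemma norm_sub_sum_smul_sq_le (hp₀ : ∀ i ∈ s, 0 ≤ p i) (hp : ∑ i ∈ s, p i = 1) (a : ι → E)
    (R : ι → ℝ) {x : E} (hx : ∀ i ∈ s, ‖x - a i‖ ^ 2 ≤ R i) :
    ‖x - ∑ i ∈ s, p i • a i‖ ^ 2 ≤
      ∑ i ∈ s, p i * (R i - ‖a i‖ ^ 2) + ‖∑ i ∈ s, p i • a i‖ ^ 2 := by
  have hweighted : ∑ i ∈ s, p i * ‖x - a i‖ ^ 2 ≤ ∑ i ∈ s, p i * R i :=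
    Finset.sum_le_sum fun i hi => mul_le_mul_of_nonneg_left (hx i hi) (hp₀ i hi)
  rw [sum_mul_norm_sub_sq hp] at hweighted
  simp only [mul_sub, Finset.sum_sub_distrib]
  nlinarith [norm_sub_sq_real x (∑ i ∈ s, p i • a i)]

end WeightedMean

lemma ediam_le_ofReal_two_mul_of_subset_closedBall {α : Type*} [PseudoMetricSpace α]
    {s : Set α} {c : α} {r : ℝ} (h : s ⊆ Metric.closedBall c r) :
    Metric.ediam s ≤ ENNReal.ofReal (2 * r) :=
  Metric.ediam_le_of_forall_dist_le fun x hx y hy => by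
    have hxc := Metric.mem_closedBall.1 (h hx)
    have hyc := Metric.mem_closedBall.1 (h hy)
    linarith [dist_triangle_right x y c]

lemma toE_mulVec_eq_sum {n m : ℕ} (A : Matrix (Fin n) (Fin m) ℝ) (p : Fin m → ℝ) :
    toE (A *ᵥ p) = ∑ i, p i • colE A i := by
  ext k
  simp [toE, colE, Matrix.mulVec, dotProduct, mul_comm]

lemma Hset_subset_closedBall {n m : ℕ} (A : Matrix (Fin n) (Fin m) ℝ) {xip : Fin m → ℝ}
    (hxip : ∀ i, 0 ≤ xip i) {p : Fin m → ℝ} (hp : p ∈ stdSimplex ℝ (Fin m)) :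
    Hset A xip ⊆ Metric.closedBall (toE (A *ᵥ p)) (Real.sqrt (rho2 A xip p)) := by
  intro x hx
  have hsq : ∀ i ∈ Finset.univ, ‖x - colE A i‖ ^ 2 ≤ xip i := fun i _ =>
    (Real.le_sqrt (norm_nonneg _) (hxip i)).1 (hx i)
  rw [Metric.mem_closedBall, dist_eq_norm, toE_mulVec_eq_sum]
  refine Real.le_sqrt_of_sq_le ?_
  simpa [rho2, omegaV, dotProduct, toE_mulVec_eq_sum] using
    norm_sub_sum_smul_sq_le (fun i _ => hp.1 i) hp.2 (colE A) xip hsq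

/-- For any subset 𝒳 of ℋ and every p ∈ Δ_m, diam(𝒳) ≤ 2ρ(p); in particular
diam(𝒳) ≤ 2ρ⋆ with ρ⋆ = inf_{p ∈ Δ_m} ρ(p). -/
theorem stmt9 {n m : ℕ} (hm : 0 < m) (A : Matrix (Fin n) (Fin m) ℝ) (xip : Fin m → ℝ)
    (hxip : ∀ i, 0 ≤ xip i) (X : Set (EuclideanSpace ℝ (Fin n))) (hX : X ⊆ Hset A xip) :
    (∀ p ∈ stdSimplex ℝ (Fin m),
        EMetric.diam X ≤ ENNReal.ofReal (2 * Real.sqrt (rho2 A xip p))) ∧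
      EMetric.diam X ≤
        ENNReal.ofReal
          (2 * sInf {r | ∃ p ∈ stdSimplex ℝ (Fin m), r = Real.sqrt (rho2 A xip p)}) := by
  have hdiam : ∀ p ∈ stdSimplex ℝ (Fin m),
      Metric.ediam X ≤ ENNReal.ofReal (2 * Real.sqrt (rho2 A xip p)) := fun p hp =>
    ediam_le_ofReal_two_mul_of_subset_closedBall (hX.trans (Hset_subset_closedBall A hxip hp))
  refine ⟨hdiam, ?_⟩
  have hne : {r | ∃ p ∈ stdSimplex ℝ (Fin m), r = Real.sqrt (rho2 A xip p)}.Nonempty :=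
    ⟨_, _, single_mem_stdSimplex ℝ ⟨0, hm⟩, rfl⟩
  have hmono : Monotone fun r : ℝ => ENNReal.ofReal (2 * r) := fun a b hab =>
    ENNReal.ofReal_le_ofReal (by linarith)
  have hcont : Continuous fun r : ℝ => ENNReal.ofReal (2 * r) :=
    ENNReal.continuous_ofReal.comp (continuous_const_mul 2)
  rw [hmono.map_csInf_of_continuousAt hcont.continuousAt hne
    ⟨0, by rintro _ ⟨p, -, rfl⟩; positivity⟩]
  exact le_sInf <| by rintro _ ⟨_, ⟨p, hp, rfl⟩, rfl⟩; exact hdiam p hp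
end
end

section
/- Let q_iᵀ denote row i of Q_m Aᵀ, and define β_{ij} = ξⱼ⁺ − ξᵢ⁻ − (Q_m ω)ⱼ + (Q_m ω)ᵢ. Then the polyhedral localization set admits the explicit halfspace representation: 𝒳_d = {x ∈ ℝⁿ : ∃α ∈ ℝ, ξ⁻ ≤ Q_m ω − 2 Q_m Aᵀ x + α𝟙 ≤ ξ⁺} equals {x ∈ ℝⁿ : 2(q_i − q_j)ᵀ x ≤ β_{ij} for all i, j = 1,…,m}. -/
/-! Eliminating the shift α: with y = Q_m ω − 2 Q_m Aᵀ x, a common α with ξᵢ⁻ − yᵢ ≤ α ≤ ξᵢ⁺ − yᵢ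
for all i exists iff every lower bound is below every upper bound; the largest lower bound is a
witness. -/

open Matrix
open scoped InnerProductSpace

noncomputable section

theorem exists_forall_mem_Icc_iff {ι α : Type*} [Finite ι] [ConditionallyCompleteLattice α]
    [Nonempty α] (f g : ι → α) :
    (∃ a, ∀ i, a ∈ Set.Icc (f i) (g i)) ↔ ∀ i j, f i ≤ g j := by
  refine ⟨fun ⟨a, ha⟩ i j => (ha i).1.trans (ha j).2, fun h => ?_⟩
  cases isEmpty_or_nonempty ι
  · exact ⟨Classical.arbitrary α, isEmptyElim⟩
  · exact ⟨⨆ i, f i, fun j => ⟨le_ciSup (Finite.bddAbove_range f) j, ciSup_le (h · j)⟩⟩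

theorem mem_Xd_iff {n m : ℕ} (A : Matrix (Fin n) (Fin m) ℝ) (xim xip : Fin m → ℝ)
    (x : EuclideanSpace ℝ (Fin n)) :
    x ∈ Xd A xim xip ↔ ∃ α : ℝ, ∀ i, α ∈ Set.Icc
      (xim i - (Qm m *ᵥ omegaV A) i + 2 * ((Qm m * Aᵀ) i ⬝ᵥ x))
      (xip i - (Qm m *ᵥ omegaV A) i + 2 * ((Qm m * Aᵀ) i ⬝ᵥ x)) := by
  refine exists_congr fun α => ?_
  simp only [Pi.le_def, Set.mem_Icc, Pi.add_apply, Pi.sub_apply, Pi.smul_apply, Pi.one_apply,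
    smul_eq_mul, mul_one, ← forall_and]
  refine forall_congr' fun i => ?_
  have hrow : ((Qm m * Aᵀ) *ᵥ x) i = (Qm m * Aᵀ) i ⬝ᵥ x := rfl
  rw [hrow]
  constructor <;> rintro ⟨h₁, h₂⟩ <;> constructor <;> linarith

/-- With q_iᵀ the i-th row of Q_m Aᵀ and
β_{ij} = ξⱼ⁺ − ξᵢ⁻ − (Q_m ω)ⱼ + (Q_m ω)ᵢ, the polyhedral localization set admits the explicit
halfspace representation 𝒳_d = {x : 2(q_i − q_j)ᵀx ≤ β_{ij} for all i, j}. -/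
theorem stmt17 {n m : ℕ} (A : Matrix (Fin n) (Fin m) ℝ) (xim xip : Fin m → ℝ) :
    Xd A xim xip =
      {x : EuclideanSpace ℝ (Fin n) | ∀ i j,
        2 * (((Qm m * Aᵀ) i - (Qm m * Aᵀ) j) ⬝ᵥ x) ≤
          xip j - xim i - (Qm m).mulVec (omegaV A) j + (Qm m).mulVec (omegaV A) i} := by
  ext x
  rw [Set.mem_ofPred_eq, mem_Xd_iff, exists_forall_mem_Icc_iff]
  refine forall₂_congr fun i j => ?_
  rw [sub_dotProduct]
  constructor <;> intro <;> linarith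
end
end
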